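/- arXiv:2510.20251 — 6 statements merged into one kernel-verified Lean document; each statement's English description precedes it below -/
import Mathlib

section
/- For integers n ≥ k ≥ 2, the Stirling number of the second kind satisfies S(n,k) ≥ (2^((n-1)/(k-1)) - 1) · S(n-1,k-1), where the exponent is the real number (n-1)/(k-1). -/
/-!
Let `G(n, k)` be the sum, over all partitions of `[n]` into `k` blocks `B₁, …, B_k`, of
`2^|B₁| + ⋯ + 2^|B_k|`. By AM-GM each inner sum is at least `k · 2^(n/k)`, so
`G(n, k) ≥ k · 2^(n/k) · S(n, k)`; on the other hand `G(n, k) = k · (S(n+1, k+1) + S(n, k))`.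
Instead of AM-GM on every partition, the lower bound is proved by induction along the recurrence
of `G`, where it needs a weighted AM-GM step and Bernoulli's inequality.
-/

/-- Stirling numbers of the second kind. -/
def stirling : ℕ → ℕ → ℕ
  | 0, 0 => 1
  | 0, _ + 1 => 0
  | _ + 1, 0 => 0
  | n + 1, k + 1 => stirling n k + (k + 1) * stirling n (k + 1)

open Real

/-- `G(n, k)` above: the element `n + 1` either forms a singleton block, adding `2`, or joins one of
the `k + 1` blocks, doubling its term, which adds up to `(k + 2)` times the old sum. -/
def blockPowSum : ℕ → ℕ → ℕ
  | 0, _ => 0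
  | _ + 1, 0 => 0
  | n + 1, k + 1 => blockPowSum n k + 2 * stirling n k + (k + 2) * blockPowSum n (k + 1)

lemma blockPowSum_eq (n k : ℕ) :
    blockPowSum n k = k * (stirling (n + 1) (k + 1) + stirling n k) := by
  induction n generalizing k with
  | zero => cases k <;> simp [blockPowSum, stirling]
  | succ n ih =>
    cases k with
    | zero => simp [blockPowSum]
    | succ k =>
      simp only [blockPowSum, ih, stirling]
      ring

lemma mul_rpow_succ_div_succ_le {k : ℝ} (hk : 0 < k) {a : ℝ} (ha : 0 < a) (x : ℝ) :
    (k + 1) * a ^ ((x + 1) / (k + 1)) ≤ k * a ^ (x / k) + a := by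
  have amgm := geom_mean_le_arith_mean2_weighted (w₁ := k / (k + 1)) (w₂ := 1 / (k + 1))
    (p₁ := a ^ (x / k)) (p₂ := a) (by positivity) (by positivity) (by positivity) ha.le
    (by field_simp)
  rw [← rpow_mul ha.le, ← rpow_add ha, show x / k * (k / (k + 1)) + 1 / (k + 1) =
    (x + 1) / (k + 1) by field_simp] at amgm
  calc (k + 1) * a ^ ((x + 1) / (k + 1))
      ≤ (k + 1) * (k / (k + 1) * a ^ (x / k) + 1 / (k + 1) * a) := by gcongr
    _ = k * a ^ (x / k) + a := by field_simp

lemma mul_two_rpow_succ_div_le {m : ℝ} (hm : 1 ≤ m) (x : ℝ) :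
    m * 2 ^ ((x + 1) / m) ≤ (m + 1) * 2 ^ (x / m) := by
  have hm0 : 0 < m := by linarith
  have bernoulli : (1 + 1 : ℝ) ^ (1 / m) ≤ 1 + 1 / m * 1 :=
    rpow_one_add_le_one_add_mul_self (by norm_num) (by positivity) (by rwa [div_le_one hm0])
  rw [add_div, rpow_add two_pos]
  calc m * (2 ^ (x / m) * 2 ^ (1 / m)) = 2 ^ (x / m) * (m * (1 + 1) ^ (1 / m)) := by ring_nf
    _ ≤ 2 ^ (x / m) * (m * (1 + 1 / m * 1)) := by gcongr
    _ = (m + 1) * 2 ^ (x / m) := by field_simp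

lemma mul_two_rpow_mul_stirling_le_blockPowSum (n k : ℕ) :
    k * (2 : ℝ) ^ ((n : ℝ) / k) * stirling n k ≤ blockPowSum n k := by
  induction n generalizing k with
  | zero => cases k <;> simp [blockPowSum, stirling]
  | succ n ih =>
    cases k with
    | zero => simp
    | succ j =>
      have singleton_step : ((j : ℝ) + 1) * 2 ^ (((n : ℝ) + 1) / (j + 1)) * stirling n j ≤
          blockPowSum n j + 2 * stirling n j := by
        rcases Nat.eq_zero_or_pos j with rfl | hj
        · cases n <;> simp [blockPowSum, stirling]
        · calc ((j : ℝ) + 1) * 2 ^ (((n : ℝ) + 1) / (j + 1)) * stirling n j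
              ≤ (j * 2 ^ ((n : ℝ) / j) + 2) * stirling n j := by
                gcongr
                exact mul_rpow_succ_div_succ_le (by exact_mod_cast hj) two_pos _
            _ ≤ blockPowSum n j + 2 * stirling n j := by linarith [ih j]
      have join_step : ((j : ℝ) + 1) * 2 ^ (((n : ℝ) + 1) / (j + 1)) *
          ((j + 1) * stirling n (j + 1)) ≤ (j + 2) * blockPowSum n (j + 1) := by
        calc ((j : ℝ) + 1) * 2 ^ (((n : ℝ) + 1) / (j + 1)) * ((j + 1) * stirling n (j + 1))
            ≤ ((j : ℝ) + 1 + 1) * 2 ^ ((n : ℝ) / (j + 1)) * ((j + 1) * stirling n (j + 1)) := by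
              gcongr ?_ * _
              exact mul_two_rpow_succ_div_le (by linarith [j.cast_nonneg (α := ℝ)]) _
          _ = (j + 2) * ((j + 1 : ℕ) * 2 ^ ((n : ℝ) / (j + 1 : ℕ)) * stirling n (j + 1)) := by
              push_cast; ring
          _ ≤ (j + 2) * blockPowSum n (j + 1) := by gcongr; exact ih (j + 1)
      simp only [blockPowSum, stirling]
      push_cast at singleton_step join_step ⊢
      linarith

lemma two_rpow_mul_stirling_le {k : ℕ} (hk : 0 < k) (n : ℕ) :
    (2 : ℝ) ^ ((n : ℝ) / k) * stirling n k ≤ stirling (n + 1) (k + 1) + stirling n k := by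
  have hk' : (0 : ℝ) < k := by exact_mod_cast hk
  have h := mul_two_rpow_mul_stirling_le_blockPowSum n k
  rw [blockPowSum_eq, mul_assoc] at h
  push_cast at h
  exact le_of_mul_le_mul_left h hk'

theorem stmt_1 (n k : ℕ) (hk : 2 ≤ k) (hkn : k ≤ n) :
    (stirling n k : ℝ) ≥
      ((2 : ℝ) ^ (((n : ℝ) - 1) / ((k : ℝ) - 1)) - 1) * stirling (n - 1) (k - 1) := by
  obtain ⟨j, rfl⟩ : ∃ j, k = j + 1 := ⟨k - 1, by omega⟩
  obtain ⟨m, rfl⟩ : ∃ m, n = m + 1 := ⟨n - 1, by omega⟩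
  have h := two_rpow_mul_stirling_le (by omega : 0 < j) m
  simp only [Nat.add_sub_cancel, Nat.cast_add, Nat.cast_one, add_sub_cancel_right]
  linarith
end

section
/- For integers m ≥ ℓ ≥ 2, the Stirling number of the second kind satisfies S(m-1,ℓ) ≥ (1/ℓ)·(2^((m-1)/(ℓ-1)) - 2) · S(m-1,ℓ-1), where the exponent is the real number (m-1)/(ℓ-1). -/
/-!
With `T k n = 2 ^ (n / k) - 2`, the inequality `T k n * S(n, k) ≤ (k + 1) * S(n, k + 1)` holds
for all `n` and all `k ≥ 1`, by induction on `n`. Expanding `S(n+1, k) = S(n, k-1) + k S(n, k)`,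
the first term is handled by the induction hypothesis at `k - 1` and
`k T k (n+1) ≤ (k-1) T (k-1) n`, the second by the induction hypothesis at `k` and
`k T k (n+1) ≤ (k+1) T k n + 2`. The first real inequality says that `x ↦ x (2 ^ (u / x) - 1)`
is antitone, because `t ↦ 2 ^ t - 1` is convex and vanishes at `0`; the second is Bernoulli's
inequality `2 ^ (1 / k) ≤ 1 + 1 / k`.
-/

open Real Set

theorem ConvexOn.mul_apply_div_le_of_le {h : ℝ → ℝ} (hh : ConvexOn ℝ univ h)
    (h0 : h 0 ≤ 0) (u : ℝ) {x y : ℝ} (hx : 0 < x) (hxy : x ≤ y) :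
    y * h (u / y) ≤ x * h (u / x) := by
  have hy : 0 < y := hx.trans_le hxy
  have hconv := hh.2 (mem_univ (u / x)) (mem_univ 0) (div_nonneg hx.le hy.le)
    (sub_nonneg.2 ((div_le_one hy).2 hxy)) (add_sub_cancel _ _)
  have hpt : (x / y) • (u / x) + (1 - x / y) • (0 : ℝ) = u / y := by
    simp only [smul_eq_mul, mul_zero, add_zero]
    field_simp
  rw [hpt, smul_eq_mul, smul_eq_mul] at hconv
  calc y * h (u / y) ≤ y * (x / y * h (u / x) + (1 - x / y) * h 0) := by gcongr
    _ = x * h (u / x) + (y - x) * h 0 := by field_simp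
    _ ≤ x * h (u / x) := by nlinarith

theorem mul_two_rpow_add_one_div_sub_two_le_sub_one_mul (n : ℝ) {x : ℝ} (hx : 1 < x) :
    x * (2 ^ ((n + 1) / x) - 2) ≤ (x - 1) * (2 ^ (n / (x - 1)) - 2) := by
  have hconv : ConvexOn ℝ univ (fun t : ℝ => (2 : ℝ) ^ t - 1) := by
    simpa only [Pi.add_def, sub_eq_add_neg] using (convexOn_rpow_left two_pos).add_const (-1)
  have hanti := hconv.mul_apply_div_le_of_le (by simp) (n + 1 - x) (sub_pos.2 hx)
    (sub_le_self x one_pos.le)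
  have e1 : (n + 1) / x = 1 + (n + 1 - x) / x := by field_simp; ring
  have e2 : n / (x - 1) = 1 + (n + 1 - x) / (x - 1) := by
    have : x - 1 ≠ 0 := (sub_pos.2 hx).ne'
    field_simp; ring
  rw [e1, e2, rpow_add two_pos, rpow_add two_pos, rpow_one]
  linarith

theorem mul_two_rpow_add_one_div_sub_two_le_add_one_mul (n : ℝ) {x : ℝ} (hx : 1 ≤ x) :
    x * (2 ^ ((n + 1) / x) - 2) ≤ (x + 1) * (2 ^ (n / x) - 2) + 2 := by
  have hx0 : 0 < x := one_pos.trans_le hx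
  have bernoulli : (2 : ℝ) ^ (1 / x) ≤ 1 + 1 / x := by
    simpa [one_add_one_eq_two] using
      rpow_one_add_le_one_add_mul_self (s := 1) (by norm_num) (by positivity)
        ((div_le_one hx0).2 hx)
  have hsplit : (2 : ℝ) ^ ((n + 1) / x) = 2 ^ (n / x) * 2 ^ (1 / x) := by
    rw [← rpow_add two_pos, add_div]
  have hpos : (0 : ℝ) ≤ 2 ^ (n / x) := by positivity
  have hmul : x * 2 ^ (1 / x) ≤ x + 1 := by
    calc x * 2 ^ (1 / x) ≤ x * (1 + 1 / x) := by gcongr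
      _ = x + 1 := by field_simp
  rw [hsplit]
  nlinarith [mul_le_mul_of_nonneg_left hmul hpos]

theorem stirling_succ_succ_cast (n k : ℕ) :
    (stirling (n + 1) (k + 1) : ℝ) = stirling n k + (k + 1) * stirling n (k + 1) := by
  simp [stirling]

theorem two_rpow_div_sub_two_mul_stirling_le (n : ℕ) {k : ℕ} (hk : 1 ≤ k) :
    ((2 : ℝ) ^ ((n : ℝ) / k) - 2) * stirling n k ≤ (k + 1) * stirling n (k + 1) := by
  induction n generalizing k with
  | zero =>
    obtain ⟨j, rfl⟩ := Nat.exists_eq_add_of_le' hk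
    simp only [stirling, CharP.cast_eq_zero, mul_zero]
    positivity
  | succ n ih =>
    obtain ⟨j, rfl⟩ := Nat.exists_eq_add_of_le' hk
    have hS : ∀ k, (0 : ℝ) ≤ stirling n k := fun k => Nat.cast_nonneg _
    have bound_prev : ((2 : ℝ) ^ (((n : ℝ) + 1) / (j + 1)) - 2) * stirling n j
        ≤ j * stirling n (j + 1) := by
      rcases j with _ | i
      · cases n with
        | zero => norm_num
        | succ => simp [stirling]
      · have hi := ih (k := i + 1) (by omega)
        have hx := mul_two_rpow_add_one_div_sub_two_le_sub_one_mul (n : ℝ)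
          (x := (i : ℝ) + 1 + 1) (by linarith [i.cast_nonneg (α := ℝ)])
        rw [add_sub_cancel_right] at hx
        push_cast at hi ⊢
        nlinarith [mul_le_mul_of_nonneg_right hx (hS (i + 1)),
          mul_le_mul_of_nonneg_left hi (by positivity : (0 : ℝ) ≤ i + 1)]
    have bound_self := ih (k := j + 1) (by omega)
    have hT := mul_two_rpow_add_one_div_sub_two_le_add_one_mul (n : ℝ) (x := (j : ℝ) + 1)
      (by linarith [j.cast_nonneg (α := ℝ)])
    rw [stirling_succ_succ_cast, stirling_succ_succ_cast]
    push_cast at bound_self ⊢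
    nlinarith [mul_le_mul_of_nonneg_right hT (hS (j + 1)),
      mul_le_mul_of_nonneg_left bound_self (by positivity : (0 : ℝ) ≤ j + 1 + 1)]

theorem stmt_2 (m ℓ : ℕ) (hℓ : 2 ≤ ℓ) (hmℓ : ℓ ≤ m) :
    (stirling (m - 1) ℓ : ℝ) ≥
      (1 / (ℓ : ℝ)) * ((2 : ℝ) ^ (((m : ℝ) - 1) / ((ℓ : ℝ) - 1)) - 2) *
        stirling (m - 1) (ℓ - 1) := by
  obtain ⟨k, rfl⟩ := Nat.exists_eq_add_of_le' (one_le_two.trans hℓ)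
  obtain ⟨n, rfl⟩ := Nat.exists_eq_add_of_le' (one_le_two.trans (hℓ.trans hmℓ))
  have h := two_rpow_div_sub_two_mul_stirling_le n (k := k) (by omega)
  simp only [Nat.add_sub_cancel, Nat.cast_add, Nat.cast_one, add_sub_cancel_right] at h ⊢
  rw [ge_iff_le, mul_assoc, one_div_mul_eq_div, div_le_iff₀ (by positivity)]
  linarith
end

section
/- For integers 1 ≤ r < n, the Stirling number of the second kind satisfies S(n,r) ≥ (1/2)(r² + r + 2)·r^(n-r-1) - 1. -/
theorem stirling_eq_stirlingSecond : ∀ n k : ℕ, stirling n k = Nat.stirlingSecond n k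
  | 0, 0 => rfl
  | 0, _ + 1 => rfl
  | _ + 1, 0 => rfl
  | n + 1, k + 1 => by
    rw [stirling, Nat.stirlingSecond_succ_succ, stirling_eq_stirlingSecond n k,
      stirling_eq_stirlingSecond n (k + 1), add_comm]

namespace Nat

theorem stirlingSecond_le_succ_left (n : ℕ) {k : ℕ} (hk : k ≠ 0) :
    stirlingSecond n k ≤ stirlingSecond (n + 1) k := by
  rw [stirlingSecond_succ_left n k hk]
  nlinarith [Nat.one_le_iff_ne_zero.mpr hk]

theorem two_mul_stirlingSecond_succ_self_left (k : ℕ) :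
    2 * stirlingSecond (k + 1) k = (k + 1) * k := by
  rw [stirlingSecond_succ_self_left, mul_comm, ← add_one_mul_choose_eq, choose_one_right]

theorem le_stirlingSecond_of_lt {n k : ℕ} (hkn : k < n) : k ≤ stirlingSecond n k := by
  rcases Nat.eq_zero_or_pos k with rfl | hk
  · exact Nat.zero_le _
  have hmono : Monotone (stirlingSecond · k) :=
    monotone_nat_of_le_succ fun m => stirlingSecond_le_succ_left m hk.ne'
  calc k ≤ k + k.choose 2 := Nat.le_add_right _ _
    _ = stirlingSecond (k + 1) k := by
      rw [stirlingSecond_succ_self_left, choose_succ_succ, choose_one_right]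
    _ ≤ stirlingSecond n k := hmono hkn

theorem mul_stirlingSecond_add_one_le {n k : ℕ} (hkn : k < n) :
    k * (stirlingSecond n k + 1) ≤ stirlingSecond (n + 1) k + 1 := by
  cases k with
  | zero => simp
  | succ j =>
    rw [stirlingSecond_succ_succ]
    have hj : j ≤ stirlingSecond n j := le_stirlingSecond_of_lt (by omega)
    nlinarith

theorem stirlingSecond_lower_bound {n r : ℕ} (hrn : r < n) :
    (r ^ 2 + r + 2) * r ^ (n - r - 1) ≤ 2 * (stirlingSecond n r + 1) := by
  induction n, hrn using Nat.le_induction with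
  | base =>
    rw [show r + 1 - r - 1 = 0 by omega, pow_zero, mul_one, mul_add,
      two_mul_stirlingSecond_succ_self_left]
    exact le_of_eq (by ring)
  | succ n hrn ih =>
    rw [show n + 1 - r - 1 = n - r - 1 + 1 by omega, pow_succ]
    calc (r ^ 2 + r + 2) * (r ^ (n - r - 1) * r)
        = (r ^ 2 + r + 2) * r ^ (n - r - 1) * r := by ring
      _ ≤ 2 * (stirlingSecond n r + 1) * r := Nat.mul_le_mul_right r ih
      _ = 2 * (r * (stirlingSecond n r + 1)) := by ring
      _ ≤ 2 * (stirlingSecond (n + 1) r + 1) :=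
        Nat.mul_le_mul_left 2 (mul_stirlingSecond_add_one_le (by omega))

end Nat

theorem stmt_3_general (n r : ℕ) (hrn : r < n) :
    (stirling n r : ℝ) ≥
      (1 / 2) * ((r : ℝ) ^ 2 + r + 2) * (r : ℝ) ^ (n - r - 1) - 1 := by
  have h : ((r ^ 2 + r + 2) * r ^ (n - r - 1) : ℝ) ≤ 2 * (stirling n r + 1) := by
    rw [stirling_eq_stirlingSecond]
    exact_mod_cast Nat.stirlingSecond_lower_bound hrn
  linarith

theorem stmt_3 (n r : ℕ) (hr : 1 ≤ r) (hrn : r < n) :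
    (stirling n r : ℝ) ≥
      (1 / 2) * ((r : ℝ) ^ 2 + r + 2) * (r : ℝ) ^ (n - r - 1) - 1 :=
  stmt_3_general n r hrn
end

section
/- Let k ≥ t+3 ≥ 4 and n ≥ 2L(k,t), where L(k,t) = (t+1) + (k-t+1)·log₂((t+1)(k-t+1)). Then for every integer s with 0 ≤ s ≤ k-t-2, the Stirling numbers satisfy S(n-t-s, k-t-s) > (t+1)²(k-t+1)²·S(n-t-s-1, k-t-s-1). -/
/-- The threshold function `L(k,t) = (t+1) + (k-t+1)·log₂((t+1)(k-t+1))`. -/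
noncomputable def Lkt (k t : ℕ) : ℝ :=
  ((t : ℝ) + 1) + ((k : ℝ) - t + 1) * Real.logb 2 (((t : ℝ) + 1) * ((k : ℝ) - t + 1))

/-!
Put `p = k - t - s - 1`, `m = n - t - s - 1` and `C = (t+1)²(k-t+1)²`; the claim is
`C · S(m, p) < S(m + 1, p + 1)`. Sorting the maps from an `m`-set to a `q`-set by their image gives
`q^m = ∑ⱼ C(q, j) j! S(m, j)`. Hence `p! S(m, p) ≤ p^m`, and a union bound over the point missed
by a non-surjective map gives `(p+1)! S(m+1, p+1) ≥ (p+1)^(m+1) - (p+1) p^(m+1)`. So it suffices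
that `(C + p) p^m < (p+1)^m`. Because `log (1 + 1/p) ≥ 1/(p+1)`, this holds once
`(p+1) log (C + p) < m`, and `n ≥ 2 L(k,t)` gives that inequality for every `p ≤ k - t - 1`.
-/

open Finset
open scoped Nat

lemma stirling_succ_succ (n k : ℕ) :
    stirling (n + 1) (k + 1) = stirling n k + (k + 1) * stirling n (k + 1) := rfl

lemma sum_range_choose_succ_mul (g : ℕ → ℕ) (k : ℕ) :
    ∑ i ∈ range (k + 2), (k + 1).choose i * g i =
      ∑ j ∈ range (k + 1), k.choose j * (g j + g (j + 1)) := by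
  simpa only [Nat.cast_id, mul_add, sum_add_distrib] using sum_choose_succ_mul (fun i _ => g i) k

theorem sum_choose_mul_factorial_mul_stirling (n k : ℕ) :
    ∑ j ∈ range (k + 1), k.choose j * (j ! * stirling n j) = k ^ n := by
  induction n generalizing k with
  | zero => simp [sum_range_succ', stirling]
  | succ n ih =>
    cases k with
    | zero => simp [stirling]
    | succ k =>
      have hterm (j : ℕ) : (k + 1).choose (j + 1) * ((j + 1)! * stirling (n + 1) (j + 1)) =
          (k + 1) * (k.choose j * (j ! * stirling n j + (j + 1)! * stirling n (j + 1))) := by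
        calc _ = ((k + 1).choose (j + 1) * (j + 1)) *
              (j ! * stirling n j + (j + 1)! * stirling n (j + 1)) := by
              rw [stirling_succ_succ, Nat.factorial_succ]; ring
          _ = _ := by rw [← Nat.add_one_mul_choose_eq]; ring
      rw [sum_range_succ', stirling]
      simp only [hterm, ← mul_sum, ← sum_range_choose_succ_mul (fun j => j ! * stirling n j), ih]
      ring

lemma factorial_mul_stirling_le_pow (n k : ℕ) : k ! * stirling n k ≤ k ^ n := by
  rw [← sum_choose_mul_factorial_mul_stirling, sum_range_succ, Nat.choose_self, one_mul]
  exact Nat.le_add_left _ _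

lemma pow_le_factorial_mul_stirling_add (n k : ℕ) :
    (k + 1) ^ n ≤ (k + 1)! * stirling n (k + 1) + (k + 1) * k ^ n := by
  rw [← sum_choose_mul_factorial_mul_stirling n (k + 1), sum_range_succ, Nat.choose_self, one_mul,
    add_comm, ← sum_choose_mul_factorial_mul_stirling n k, mul_sum]
  refine Nat.add_le_add_left (sum_le_sum fun j hj => ?_) _
  have hchoose : (k + 1).choose j ≤ (k + 1) * k.choose j :=
    calc (k + 1).choose j ≤ (k + 1).choose j * (k + 1 - j) :=
          Nat.le_mul_of_pos_right _ (by simp at hj; omega)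
      _ = (k + 1) * k.choose j := by rw [← Nat.choose_mul_succ_eq, mul_comm]
  rw [← mul_assoc (k + 1)]
  exact Nat.mul_le_mul_right _ hchoose

open Real

lemma mul_stirling_lt_stirling_succ_succ {C : ℝ} {m p : ℕ} (hC : 0 ≤ C)
    (h : (C + p) * (p : ℝ) ^ m < ((p : ℝ) + 1) ^ m) :
    C * stirling m p < stirling (m + 1) (p + 1) := by
  have hupper : (p ! : ℝ) * stirling m p ≤ (p : ℝ) ^ m := by
    exact_mod_cast factorial_mul_stirling_le_pow m p
  have hlower : ((p : ℝ) + 1) ^ (m + 1) ≤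
      ((p + 1)! : ℝ) * stirling (m + 1) (p + 1) + (p + 1) * (p : ℝ) ^ (m + 1) := by
    exact_mod_cast pow_le_factorial_mul_stirling_add (m + 1) p
  have hfact : ((p + 1)! : ℝ) = (p + 1) * p ! := by push_cast [Nat.factorial_succ]; ring
  refine lt_of_mul_lt_mul_left ?_ (by positivity : (0 : ℝ) ≤ (p + 1)!)
  calc ((p + 1)! : ℝ) * (C * stirling m p) = C * (p + 1) * (p ! * stirling m p) := by
        rw [hfact]; ring
    _ ≤ C * (p + 1) * p ^ m := by gcongr
    _ < (p + 1) * ((p + 1) ^ m - p * p ^ m) := by linear_combination ((p : ℝ) + 1) * h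
    _ ≤ _ := by rw [pow_succ, pow_succ] at hlower; linarith

lemma mul_pow_lt_add_one_pow {y p : ℝ} {M : ℕ} (hy : 0 < y) (hp : 0 < p)
    (h : log y * (p + 1) < M) : y * p ^ M < (p + 1) ^ M := by
  have hinv : 1 / (p + 1) ≤ log (p + 1) - log p := by
    have := one_sub_inv_le_log_of_pos (x := (p + 1) / p) (by positivity)
    rwa [inv_div, one_sub_div (by positivity), add_sub_cancel_left,
      log_div (by positivity) hp.ne'] at this
  rw [← log_lt_log_iff (by positivity) (by positivity), log_mul hy.ne' (by positivity), log_pow,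
    log_pow]
  calc log y + M * log p < M * (1 / (p + 1)) + M * log p := by
        rw [mul_one_div]; linarith [(lt_div_iff₀ (by positivity : (0 : ℝ) < p + 1)).2 h]
    _ ≤ M * (log (p + 1) - log p) + M * log p := by gcongr
    _ = M * log (p + 1) := by ring

/-- With `a = t + 1` and `b = k - t + 1` we have `a + b - 2 = k`, so the right-hand side is
`2 L(k,t) - k + p`. -/
lemma log_sq_mul_sq_add_mul_lt {a b p : ℝ} (ha : 1 ≤ a) (hb : 4 ≤ b) (hp : 0 ≤ p)
    (hpb : p ≤ b - 2) :
    log (a ^ 2 * b ^ 2 + p) * (p + 1) < 2 * (a + b * logb 2 (a * b)) - (a + b - 2) + p := by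
  have hlog_ab : log (a * b) = log 2 * logb 2 (a * b) :=
    (mul_div_cancel₀ _ (log_pos one_lt_two).ne').symm
  have hl : 2 ≤ logb 2 (a * b) := by
    rw [le_logb_iff_rpow_le one_lt_two (by positivity)]
    norm_num; nlinarith
  set l := logb 2 (a * b)
  set c := log 2 * (1 + 2 * l)
  have hlog : log (a ^ 2 * b ^ 2 + p) ≤ c := by
    have hp_le : p ≤ a ^ 2 * b ^ 2 := by nlinarith [one_le_pow₀ (n := 2) ha]
    calc log (a ^ 2 * b ^ 2 + p) ≤ log (2 * (a * b) ^ 2) :=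
          log_le_log (by positivity) (by linarith)
      _ = c := by rw [log_mul two_ne_zero (by positivity), log_pow, hlog_ab]; push_cast; ring
  have hc_ge : 1 ≤ c := by nlinarith [log_two_gt_d9]
  have hc_le : c ≤ 2 * l := by nlinarith [log_two_lt_d9]
  have h1 : (c - 1) * (p + 1) ≤ (c - 1) * (b - 1) := by gcongr; linarith
  have h2 : c * (b - 1) ≤ 2 * l * (b - 1) := by gcongr; linarith
  calc log (a ^ 2 * b ^ 2 + p) * (p + 1) ≤ c * (p + 1) := by gcongr
    _ < _ := by nlinarith

theorem stmt_5_general (k t n : ℕ) (hk : t + 3 ≤ k) (hn : (n : ℝ) ≥ 2 * Lkt k t) :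
    ∀ s : ℕ, s ≤ k - t - 2 →
      ((t : ℝ) + 1) ^ 2 * ((k : ℝ) - t + 1) ^ 2 * stirling (n - t - s - 1) (k - t - s - 1) <
        (stirling (n - t - s) (k - t - s) : ℝ) := by
  intro s hs
  obtain ⟨p, hp⟩ : ∃ p, k - t - s = p + 1 := ⟨k - t - s - 1, by omega⟩
  have hpR : (p : ℝ) = k - t - s - 1 := by
    rw [show k = p + t + s + 1 by omega]; push_cast; ring
  have hkR : (t : ℝ) + 3 ≤ k := by exact_mod_cast hk
  have hbound := log_sq_mul_sq_add_mul_lt (a := t + 1) (b := k - t + 1) (p := p)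
    (by simp) (by linarith) (by positivity) (by linarith)
  have hy : 1 ≤ ((t : ℝ) + 1) ^ 2 * ((k : ℝ) - t + 1) ^ 2 + p := by
    have : (1 : ℝ) ≤ ((t : ℝ) + 1) ^ 2 * ((k : ℝ) - t + 1) ^ 2 :=
      one_le_mul_of_one_le_of_one_le (one_le_pow₀ (by simp)) (one_le_pow₀ (by linarith))
    linarith [p.cast_nonneg (α := ℝ)]
  have hlhs_nonneg := mul_nonneg (log_nonneg hy) (by positivity : (0 : ℝ) ≤ p + 1)
  unfold Lkt at hn
  obtain ⟨m, hm⟩ : ∃ m, n - t - s = m + 1 := by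
    have : ((t + s + 1 : ℕ) : ℝ) < n := by push_cast; linarith
    have : t + s + 1 < n := by exact_mod_cast this
    exact ⟨n - t - s - 1, by omega⟩
  have hmR : (m : ℝ) = n - t - s - 1 := by
    rw [show n = m + t + s + 1 by omega]; push_cast; ring
  rw [hm, hp, Nat.add_sub_cancel, Nat.add_sub_cancel]
  exact mul_stirling_lt_stirling_succ_succ (by positivity)
    (mul_pow_lt_add_one_pow (by linarith) (by exact_mod_cast (show 0 < p by omega))
      (by linarith))

theorem stmt_5 (k t n : ℕ) (ht : 1 ≤ t) (hk : t + 3 ≤ k) (hn : (n : ℝ) ≥ 2 * Lkt k t) :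
    ∀ s : ℕ, s ≤ k - t - 2 →
      ((t : ℝ) + 1) ^ 2 * ((k : ℝ) - t + 1) ^ 2 * stirling (n - t - s - 1) (k - t - s - 1) <
        (stirling (n - t - s) (k - t - s) : ℝ) :=
  stmt_5_general k t n hk hn
end

section
/- Let k ≥ t+3 ≥ 4 and n ≥ 2L(k,t), where L(k,t) = (t+1) + (k-t+1)·log₂((t+1)(k-t+1)). Then for every integer s with 0 ≤ s ≤ k-t-2, S(n-t-s-1, k-t-s) > (t+1)²(k-t+1)·S(n-t-s-1, k-t-s-1). -/
/-! With `m = n - t - s - 1`, `J + 1 = k - t - s` and `C = (t+1)²(k-t+1)`, the identity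
`x ^ m = ∑ᵢ S(m, i) · x(x-1)⋯(x-i+1)` at `x = J` and `x = J + 1` gives `J! S(m, J) ≤ J ^ m` and
`(J+1)! S(m, J+1) ≥ (J+1) ^ m - (J+1) J ^ m`. The claim thus reduces to
`(C+1)(J+1) < (1 + 1/J) ^ m`, which holds since `log (1 + 1/J) ≥ 1/(J+1)` and the threshold on `n`
makes `m / (J+1)` exceed `2 log₂ ((t+1)(k-t+1)) ≥ log ((C+1)(J+1))`. -/

open Finset Nat

theorem sum_stirling_mul_descFactorial (m n : ℕ) :
    ∑ i ∈ range (n + 1), stirling m i * n.descFactorial i = n ^ m := by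
  induction m with
  | zero => simp [sum_range_succ', stirling]
  | succ m ih =>
    have falling_mul (i : ℕ) (hi : i ∈ range (n + 1)) :
        stirling m i * n.descFactorial i * n =
          stirling m i * n.descFactorial (i + 1) + i * stirling m i * n.descFactorial i := by
      obtain ⟨d, rfl⟩ := Nat.exists_eq_add_of_le (Nat.lt_succ_iff.mp (mem_range.mp hi))
      rw [Nat.descFactorial_succ, Nat.add_sub_cancel_left]
      ring
    rw [pow_succ, ← ih, sum_mul, sum_congr rfl falling_mul, sum_add_distrib,
      sum_range_succ (fun i => stirling m i * n.descFactorial (i + 1)),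
      Nat.descFactorial_of_lt n.lt_succ_self, sum_range_succ' (fun i => i * stirling m i * _),
      sum_range_succ']
    simp only [stirling, mul_zero, add_zero, zero_mul, ← sum_add_distrib]
    exact sum_congr rfl fun i _ => by ring

theorem stirling_mul_factorial_le (m k : ℕ) : stirling m k * k ! ≤ k ^ m := by
  rw [← sum_stirling_mul_descFactorial m k, ← Nat.descFactorial_self]
  exact single_le_sum (f := fun i => stirling m i * k.descFactorial i) (fun _ _ => Nat.zero_le _)
    (self_mem_range_succ k)

theorem succ_pow_le_stirling_mul_factorial_add (m k : ℕ) :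
    (k + 1) ^ m ≤ stirling m (k + 1) * (k + 1)! + (k + 1) * k ^ m := by
  rw [← sum_stirling_mul_descFactorial m (k + 1), sum_range_succ, Nat.descFactorial_self, add_comm,
    ← sum_stirling_mul_descFactorial m k, mul_sum]
  refine Nat.add_le_add_left (sum_le_sum fun i hi => ?_) _
  calc stirling m i * (k + 1).descFactorial i
      ≤ stirling m i * ((k + 1 - i) * (k + 1).descFactorial i) := by
        gcongr; exact Nat.le_mul_of_pos_left _ (by simp at hi; omega)
    _ = (k + 1) * (stirling m i * k.descFactorial i) := by rw [Nat.succ_descFactorial]; ring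

theorem mul_stirling_lt_stirling_succ {C J m : ℕ} (h : (C + 1) * (J + 1) * J ^ m < (J + 1) ^ m) :
    C * stirling m J < stirling m (J + 1) := by
  have upper := stirling_mul_factorial_le m J
  have lower := succ_pow_le_stirling_mul_factorial_add m J
  refine Nat.lt_of_mul_lt_mul_right (a := (J + 1)!) ?_
  calc C * stirling m J * (J + 1)! = C * (J + 1) * (stirling m J * J !) := by
        rw [factorial_succ]; ring
    _ ≤ C * (J + 1) * J ^ m := by gcongr
    _ < stirling m (J + 1) * (J + 1)! := by nlinarith

theorem mul_pow_lt_succ_pow {A : ℝ} {J m : ℕ} (hJ : 0 < J) (hA : 0 < A)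
    (h : (J + 1) * Real.log A < m) : A * J ^ m < (J + 1) ^ m := by
  have hJ' : (0 : ℝ) < J := by exact_mod_cast hJ
  have log_ratio : 1 / (J + 1) ≤ Real.log ((J + 1) / J) := by
    have := Real.one_sub_inv_le_log_of_pos (x := ((J : ℝ) + 1) / J) (by positivity)
    rwa [inv_div, one_sub_div (by positivity), add_sub_cancel_left] at this
  have : Real.log A < Real.log (((J + 1) / J) ^ m) := by
    rw [Real.log_pow]
    calc Real.log A < m * (1 / (J + 1)) := by rw [mul_one_div, lt_div_iff₀ (by positivity)]; linarith
      _ ≤ m * Real.log ((J + 1) / J) := by gcongr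
  rwa [Real.log_lt_log_iff hA (by positivity), div_pow, lt_div_iff₀ (by positivity)] at this

theorem succ_mul_log_lt_of_two_mul_Lkt_le (t s J n : ℕ) (hn : 2 * Lkt (t + s + J + 1) t ≤ n) :
    (J + 1) * Real.log ((((t : ℝ) + 1) ^ 2 * (s + J + 2) + 1) * (J + 1)) < (n - t - s - 1 : ℕ) := by
  have hL : Lkt (t + s + J + 1) t =
      t + 1 + (s + J + 2) * Real.logb 2 ((t + 1) * (s + J + 2)) := by
    unfold Lkt; push_cast; ring_nf
  set x : ℝ := (t + 1) * (s + J + 2)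
  set l := Real.logb 2 x with hl_def
  have hx : 2 ≤ x := by nlinarith
  have hl : 1 ≤ l := (Real.le_logb_iff_rpow_le one_lt_two (by positivity)).2 (by simpa)
  have hlog : Real.log x ≤ l := by
    rw [hl_def, ← Real.log_div_log, le_div_iff₀ (Real.log_pos one_lt_two)]
    nlinarith [Real.log_two_lt_d9, Real.log_nonneg (by linarith : (1 : ℝ) ≤ x)]
  have hA : (((t : ℝ) + 1) ^ 2 * (s + J + 2) + 1) * (J + 1) ≤ x ^ 2 := by
    have : (J + 1 : ℝ) ≤ (t + 1) ^ 2 * ((s + J + 2) * (s + 1)) :=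
      calc (J + 1 : ℝ) ≤ (s + J + 2) * (s + 1) := by nlinarith
        _ ≤ _ := le_mul_of_one_le_left (by positivity) (by nlinarith)
    linear_combination this
  have hlogA : Real.log ((((t : ℝ) + 1) ^ 2 * (s + J + 2) + 1) * (J + 1)) ≤ 2 * l := by
    calc _ ≤ Real.log (x ^ 2) := Real.log_le_log (by positivity) hA
      _ = 2 * Real.log x := by rw [Real.log_pow]; push_cast; ring
      _ ≤ 2 * l := by linarith
  have hn' : 2 * (t + 1 + (s + J + 2) * l) ≤ n := hL ▸ hn
  have hsub : ((n - t - s - 1 : ℕ) : ℝ) = n - t - s - 1 := by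
    have : t + s + 1 ≤ n := by exact_mod_cast (show (t + s + 1 : ℝ) ≤ n by nlinarith)
    obtain ⟨m, rfl⟩ := Nat.exists_eq_add_of_le this
    rw [show t + s + 1 + m - t - s - 1 = m by omega]; push_cast; ring
  calc _ ≤ (J + 1 : ℝ) * (2 * l) := by gcongr
    _ < _ := by rw [hsub]; nlinarith

theorem stmt_6_general (k t n : ℕ) (hk : t + 3 ≤ k) (hn : (n : ℝ) ≥ 2 * Lkt k t) :
    ∀ s : ℕ, s ≤ k - t - 2 →
      ((t : ℝ) + 1) ^ 2 * ((k : ℝ) - t + 1) * stirling (n - t - s - 1) (k - t - s - 1) <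
        (stirling (n - t - s - 1) (k - t - s) : ℝ) := by
  intro s hs
  obtain ⟨J, rfl⟩ : ∃ J, k = t + s + J + 1 := ⟨k - t - s - 1, by omega⟩
  have hJ : 0 < J := by omega
  rw [show t + s + J + 1 - t - s - 1 = J by omega, show t + s + J + 1 - t - s = J + 1 by omega]
  have pow_gap := mul_pow_lt_succ_pow hJ (by positivity) (succ_mul_log_lt_of_two_mul_Lkt_le t s J n hn)
  have hC : ((t : ℝ) + 1) ^ 2 * (((t + s + J + 1 : ℕ) : ℝ) - t + 1) =
      (((t + 1) ^ 2 * (s + J + 2) : ℕ) : ℝ) := by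
    push_cast; ring
  rw [hC]
  exact_mod_cast mul_stirling_lt_stirling_succ (by exact_mod_cast pow_gap)

theorem stmt_6 (k t n : ℕ) (ht : 1 ≤ t) (hk : t + 3 ≤ k) (hn : (n : ℝ) ≥ 2 * Lkt k t) :
    ∀ s : ℕ, s ≤ k - t - 2 →
      ((t : ℝ) + 1) ^ 2 * ((k : ℝ) - t + 1) * stirling (n - t - s - 1) (k - t - s - 1) <
        (stirling (n - t - s - 1) (k - t - s) : ℝ) :=
  stmt_6_general k t n hk hn
end

section
/- For every integer t ≥ 1, the function Q(s,t) := s^(L(s+t,t) - 2s - t + 1) / C(s+t, t), where L(k,t) = (t+1) + (k-t+1)·log₂((t+1)(k-t+1)), is increasing in s for s ≥ 2, and consequently Q(s,t) ≥ Q(2,t) = 27(t+1)²/(2(t+2)) ≥ 18 for all s ≥ 2. -/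
/-- `Q(s,t) = s^(L(s+t,t) - 2s - t + 1) / C(s+t,t)`. -/
noncomputable def Qst (s t : ℕ) : ℝ :=
  (s : ℝ) ^ (Lkt (s + t) t - 2 * s - t + 1) / (Nat.choose (s + t) t : ℝ)

open Real

noncomputable def qExponent (a x : ℝ) : ℝ := (x + 1) * (a + logb 2 (x + 1)) - 2 * x + 2

lemma Qst_eq_rpow_qExponent (s t : ℕ) :
    Qst s t = (s : ℝ) ^ qExponent (logb 2 (t + 1)) s / (s + t).choose t := by
  have hk : ((s + t : ℕ) : ℝ) - t + 1 = s + 1 := by push_cast; ring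
  rw [Qst, Lkt, qExponent, hk, logb_mul (by positivity) (by positivity)]
  ring_nf

lemma two_le_logb_two {x : ℝ} (hx : 4 ≤ x) : 2 ≤ logb 2 x := by
  rw [le_logb_iff_rpow_le one_lt_two (by linarith)]
  norm_num [hx]

lemma qExponent_nonneg {a x : ℝ} (ha : 0 ≤ a) (hx : 3 ≤ x) : 0 ≤ qExponent a x := by
  have := two_le_logb_two (show 4 ≤ x + 1 by linarith)
  unfold qExponent
  nlinarith

lemma le_qExponent_add_one_sub (a : ℝ) {x : ℝ} (hx : 2 ≤ x) :
    a ≤ qExponent a (x + 1) - qExponent a x := by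
  have hz : 2 ≤ logb 2 (x + 2) := two_le_logb_two (by linarith)
  have hyz : logb 2 (x + 1) ≤ logb 2 (x + 2) :=
    logb_le_logb_of_le one_lt_two (by linarith) (by linarith)
  unfold qExponent
  rw [show x + 1 + 1 = x + 2 by ring]
  nlinarith

lemma qExponent_mul_logb_add_le {a x : ℝ} (ha : 0 ≤ a) (hx : 2 ≤ x) :
    qExponent a x * logb 2 x + a ≤ qExponent a (x + 1) * logb 2 (x + 1) := by
  have hX : 1 ≤ logb 2 x := by
    rw [le_logb_iff_rpow_le one_lt_two (by linarith)]; simpa using hx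
  have hXY : logb 2 x ≤ logb 2 (x + 1) :=
    logb_le_logb_of_le one_lt_two (by linarith) (by linarith)
  have hd := le_qExponent_add_one_sub a hx
  calc qExponent a x * logb 2 x + a
      ≤ qExponent a x * logb 2 x + (qExponent a (x + 1) - qExponent a x) * logb 2 x := by
        nlinarith
    _ = qExponent a (x + 1) * logb 2 x := by ring
    _ ≤ qExponent a (x + 1) * logb 2 (x + 1) :=
        mul_le_mul_of_nonneg_left hXY (qExponent_nonneg ha (by linarith))

lemma rpow_qExponent_mul_le {t x : ℝ} (ht : 0 ≤ t) (hx : 2 ≤ x) :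
    x ^ qExponent (logb 2 (t + 1)) x * (x + t + 1)
      ≤ (x + 1) ^ qExponent (logb 2 (t + 1)) (x + 1) * (x + 1) := by
  set a := logb 2 (t + 1)
  have hsum : logb 2 (x + t + 1) ≤ logb 2 (x + 1) + a := by
    rw [← logb_mul (by linarith) (by linarith)]
    exact logb_le_logb_of_le one_lt_two (by linarith) (by nlinarith)
  have hcore := qExponent_mul_logb_add_le (logb_nonneg one_lt_two (by linarith) : 0 ≤ a) hx
  rw [← logb_le_logb one_lt_two (by positivity) (by positivity),
    logb_mul (by positivity) (by linarith), logb_mul (by positivity) (by linarith),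
    logb_rpow_eq_mul_logb_of_pos (by linarith), logb_rpow_eq_mul_logb_of_pos (by linarith)]
  linarith

lemma choose_add_one_add_mul (s t : ℕ) :
    (s + 1 + t).choose t * (s + 1) = (s + t).choose t * (s + t + 1) := by
  have h := Nat.choose_mul_succ_eq (s + t) t
  rw [show s + t + 1 - t = s + 1 by omega] at h
  rw [h, show s + 1 + t = s + t + 1 by omega]

lemma Qst_le_Qst_add_one (t : ℕ) {s : ℕ} (hs : 2 ≤ s) : Qst s t ≤ Qst (s + 1) t := by
  have hC : (0 : ℝ) < (s + t).choose t := by exact_mod_cast Nat.choose_pos (by omega)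
  have hC' : ((s + 1 + t).choose t : ℝ) = (s + t).choose t * (s + t + 1) / (s + 1) := by
    rw [eq_div_iff (by positivity)]; exact_mod_cast choose_add_one_add_mul s t
  have key :=
    rpow_qExponent_mul_le (t.cast_nonneg : (0 : ℝ) ≤ t) (by exact_mod_cast hs : (2 : ℝ) ≤ s)
  rw [Qst_eq_rpow_qExponent, Qst_eq_rpow_qExponent, hC', div_div_eq_mul_div, Nat.cast_add_one,
    ← mul_div_mul_right _ _ (by positivity : (s + t + 1 : ℝ) ≠ 0)]
  gcongr

lemma Qst_monotoneOn (t : ℕ) : MonotoneOn (Qst · t) (Set.Ici 2) :=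
  monotoneOn_nat_Ici_of_le_succ fun _ hs => Qst_le_Qst_add_one t hs

lemma Qst_two (t : ℕ) : Qst 2 t = 27 * ((t : ℝ) + 1) ^ 2 / (2 * ((t : ℝ) + 2)) := by
  have hexp : qExponent (logb 2 (t + 1)) 2 = logb 2 ((t + 1) * 3) * (3 : ℕ) - 2 := by
    rw [qExponent, logb_mul (by positivity) (by norm_num)]; norm_num; ring
  have hpow : (2 : ℝ) ^ qExponent (logb 2 (t + 1)) 2 = ((t + 1) * 3) ^ 3 / 4 := by
    rw [hexp, rpow_sub two_pos, rpow_mul zero_le_two,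
      rpow_logb two_pos (by norm_num) (by positivity)]
    norm_num
  have hchoose : ((2 + t).choose t : ℝ) = (t + 2) * (t + 1) / 2 := by
    rw [add_comm, Nat.choose_symm_add, Nat.cast_choose_two]; push_cast; ring
  rw [Qst_eq_rpow_qExponent, Nat.cast_ofNat, hpow, hchoose]
  field_simp
  ring

theorem stmt_8 (t : ℕ) (ht : 1 ≤ t) :
    (∀ s₁ s₂ : ℕ, 2 ≤ s₁ → s₁ ≤ s₂ → Qst s₁ t ≤ Qst s₂ t) ∧
    Qst 2 t = 27 * ((t : ℝ) + 1) ^ 2 / (2 * ((t : ℝ) + 2)) ∧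
    (∀ s : ℕ, 2 ≤ s → 18 ≤ Qst s t) := by
  have hmono : ∀ s₁ s₂ : ℕ, 2 ≤ s₁ → s₁ ≤ s₂ → Qst s₁ t ≤ Qst s₂ t :=
    fun s₁ s₂ h₁ h₁₂ => Qst_monotoneOn t h₁ (Set.mem_Ici.2 (h₁.trans h₁₂)) h₁₂
  have h18 : 18 ≤ Qst 2 t := by
    have hT : (1 : ℝ) ≤ t := by exact_mod_cast ht
    rw [Qst_two, le_div_iff₀ (by positivity)]
    -- `27(t+1)² - 36(t+2) = 9(t-1)(3t+5)`
    nlinarith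
  exact ⟨hmono, Qst_two t, fun s hs => h18.trans (hmono 2 s le_rfl hs)⟩
end
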